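/- The number of partial Dyck words on Z_n with exactly i left parentheses equals binom(n, i), for any integers i, n with 0 ≤ 2i ≤ n. -/

import Mathlib

open scoped Classical

/-- A graph is *even* if every connected component has an even number of vertices. -/
def SimpleGraph.IsEvenGraph {V : Type*} (G : SimpleGraph V) : Prop :=
  ∀ c : G.ConnectedComponent, Even (Nat.card c.supp)

/-- A graph is *odd* if every connected component has an odd number of vertices. -/
def SimpleGraph.IsOddGraph {V : Type*} (G : SimpleGraph V) : Prop :=
  ∀ c : G.ConnectedComponent, Odd (Nat.card c.supp)

/-- The number of connected components of a graph. -/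
noncomputable def SimpleGraph.kappa {V : Type*} (G : SimpleGraph V) : ℕ :=
  Nat.card G.ConnectedComponent

/-- The `a`-number of the induced subgraph `G[s]`, defined recursively:
`1` for the null graph, `0` if `G[s]` is not even, and minus the sum of the
`a`-numbers of all proper induced subgraphs otherwise. -/
noncomputable def aNum {V : Type*} (G : SimpleGraph V) (s : Finset V) : ℤ :=
  if s = ∅ then 1
  else if (G.induce (s : Set V)).IsEvenGraph then
    - ∑ t ∈ (s.powerset.filter (· ≠ s)).attach, aNum G t.1
  else 0
termination_by s.card
decreasing_by
  have h := t.2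
  simp only [Finset.mem_filter, Finset.mem_powerset] at h
  exact Finset.card_lt_card (lt_of_le_of_ne h.1 h.2)

/-- The `b`-number of the induced subgraph `G[s]`, defined recursively:
`1` for the null graph, `0` if `G[s]` is not odd, and minus the sum of the
`b`-numbers of all proper induced subgraphs otherwise. -/
noncomputable def bNum {V : Type*} (G : SimpleGraph V) (s : Finset V) : ℤ :=
  if s = ∅ then 1
  else if (G.induce (s : Set V)).IsOddGraph then
    - ∑ t ∈ (s.powerset.filter (· ≠ s)).attach, bNum G t.1
  else 0
termination_by s.card
decreasing_by
  have h := t.2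
  simp only [Finset.mem_filter, Finset.mem_powerset] at h
  exact Finset.card_lt_card (lt_of_le_of_ne h.1 h.2)

/-- The `a`-number of a finite graph `G`. -/
noncomputable def aNumber {V : Type*} [Fintype V] (G : SimpleGraph V) : ℤ :=
  aNum G Finset.univ

/-- The `b`-number of a finite graph `G`. -/
noncomputable def bNumber {V : Type*} [Fintype V] (G : SimpleGraph V) : ℤ :=
  bNum G Finset.univ

/-- The alphabet for partial Dyck words: a left parenthesis, a right parenthesis,
or the letter `*`. -/
inductive DyckSym : Type
  | lpar : DyckSym
  | rpar : DyckSym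
  | star : DyckSym
deriving DecidableEq

/-- A list over the alphabet `{(, ), *}` is a Dyck word if it contains no `*`,
every prefix has at least as many `(`'s as `)`'s, and the total numbers of `(`'s
and `)`'s agree. -/
def IsDyckList (l : List DyckSym) : Prop :=
  DyckSym.star ∉ l ∧
    (∀ k, (l.take k).count DyckSym.rpar ≤ (l.take k).count DyckSym.lpar) ∧
    l.count DyckSym.rpar = l.count DyckSym.lpar

/-- The word read off from `f : ℤ_n → {(, ), *}` along the integer interval
starting at `a` of length `len`, via the quotient map `π : ℤ → ℤ_n`. -/
def wordOn (n : ℕ) (f : ZMod n → DyckSym) (a : ℤ) (len : ℕ) : List DyckSym :=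
  (List.range len).map fun j => f ((a + j : ℤ) : ZMod n)

/-- `f : ℤ_n → {(, ), *}` is a partial Dyck word if there are finitely many integer
intervals `N_1, …, N_k` whose images under `π : ℤ → ℤ_n` partition `ℤ_n` (each point
of `ℤ_n` is hit exactly once), and `f ∘ π` restricted to each `N_j` induces either a
Dyck word or the single-letter word `*`. -/
def IsPartialDyckWord (n : ℕ) (f : ZMod n → DyckSym) : Prop :=
  ∃ (k : ℕ) (start : Fin k → ℤ) (len : Fin k → ℕ),
    (∀ j, 0 < len j) ∧
    (∀ x : ZMod n, ∃! p : Fin k × ℕ,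
      p.2 < len p.1 ∧ x = ((start p.1 + p.2 : ℤ) : ZMod n)) ∧
    (∀ j, IsDyckList (wordOn n f (start j) (len j)) ∨
      wordOn n f (start j) (len j) = [DyckSym.star])

namespace PDW
open DyckSym

def uval : DyckSym → ℤ
  | .lpar => 1
  | _ => -1

def usum (l : List DyckSym) : ℤ := (l.map uval).sum

@[simp] lemma usum_nil : usum [] = 0 := rfl
@[simp] lemma usum_cons (s : DyckSym) (l : List DyckSym) : usum (s :: l) = uval s + usum l := by
  simp [usum]
@[simp] lemma usum_append (l₁ l₂ : List DyckSym) : usum (l₁ ++ l₂) = usum l₁ + usum l₂ := by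
  simp [usum]
@[simp] lemma usum_singleton (s : DyckSym) : usum [s] = uval s := by simp

lemma uval_eq (s : DyckSym) : uval s = if s = lpar then 1 else -1 := by
  cases s <;> rfl

lemma usum_eq (l : List DyckSym) : usum l = 2 * l.count lpar - l.length := by
  induction l with
  | nil => simp
  | cons s l ih =>
    cases s <;> simp [List.count_cons, ih, uval] <;> push_cast <;> ring

lemma length_eq_counts {l : List DyckSym} (h : star ∉ l) :
    l.length = l.count lpar + l.count rpar := by
  induction l with
  | nil => simp
  | cons s l ih =>
    simp only [List.mem_cons, not_or] at h
    cases s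
    · simp [List.count_cons, ih h.2]; omega
    · simp [List.count_cons, ih h.2]; omega
    · exact absurd rfl h.1

lemma usum_eq_counts {l : List DyckSym} (h : star ∉ l) :
    usum l = l.count lpar - l.count rpar := by
  rw [usum_eq, length_eq_counts h]
  push_cast
  ring

end PDW

namespace PDW
open DyckSym

lemma flatMap_single {α β : Type} (l : List α) (g : α → β) :
    (l.flatMap fun a => [g a]) = l.map g := by
  induction l with
  | nil => rfl
  | cons b l ih => rw [List.flatMap_cons, List.map_cons, ih]; rfl

lemma wordOn_eq (n : ℕ) (f : ZMod n → DyckSym) (a : ℤ) (len : ℕ) :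
    wordOn n f a len = (List.range len).map (fun j : ℕ => f (((a + (j:ℤ)) : ℤ) : ZMod n)) := by
  rw [wordOn]
  rw [show (Bind.bind (List.range len) (fun (a:ℕ) => (Pure.pure (Nat.cast a) : List ℤ)))
      = (List.range len).map (fun a : ℕ => (a : ℤ)) from flatMap_single _ _]
  rw [List.map_map]
  rfl

variable {n : ℕ} {f : ZMod n → DyckSym}

@[simp] lemma wordOn_length (a : ℤ) (m : ℕ) : (wordOn n f a m).length = m := by
  rw [wordOn_eq, List.length_map, List.length_range]

lemma wordOn_add (a : ℤ) (p q : ℕ) :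
    wordOn n f a (p + q) = wordOn n f a p ++ wordOn n f (a + p) q := by
  rw [wordOn_eq, wordOn_eq, wordOn_eq, List.range_add, List.map_append, List.map_map]
  congr 1
  apply List.map_congr_left
  intro j _
  simp only [Function.comp_apply]
  congr 1
  push_cast
  ring

lemma wordOn_congr {a b : ℤ} (h : (a : ZMod n) = (b : ZMod n)) (m : ℕ) :
    wordOn n f a m = wordOn n f b m := by
  rw [wordOn_eq, wordOn_eq]
  apply List.map_congr_left
  intro j _
  congr 1
  push_cast
  rw [h]

lemma wordOn_getElem (a : ℤ) {m L : ℕ} (hm : m < L) :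
    (wordOn n f a L)[m]'(by simpa using hm) = f ((a + m : ℤ) : ZMod n) := by
  simp [wordOn_eq]

@[simp] lemma wordOn_one (a : ℤ) : wordOn n f a 1 = [f (a : ZMod n)] := by
  rw [wordOn_eq]
  rw [show List.range 1 = [0] from rfl]
  simp

lemma wordOn_take (a : ℤ) {m L : ℕ} (hm : m ≤ L) :
    (wordOn n f a L).take m = wordOn n f a m := by
  rw [show L = m + (L - m) by omega, wordOn_add]
  rw [List.take_append_of_le_length (by simp), List.take_of_length_le (by simp)]

lemma wordOn_drop (a : ℤ) {m L : ℕ} (hm : m ≤ L) :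
    (wordOn n f a L).drop m = wordOn n f (a + m) (L - m) := by
  rw [show L = m + (L - m) by omega, wordOn_add]
  rw [List.drop_append_of_le_length (by simp)]
  simp

lemma usum_le_length (l : List DyckSym) : usum l ≤ l.length := by
  rw [usum_eq]
  have : l.count lpar ≤ l.length := List.count_le_length
  omega

lemma neg_length_le_usum (l : List DyckSym) : -(l.length : ℤ) ≤ usum l := by
  rw [usum_eq]; omega

/-- Dyck words via `usum`. -/
lemma isDyckList_iff (d : List DyckSym) :
    IsDyckList d ↔ star ∉ d ∧ (∀ k, 0 ≤ usum (d.take k)) ∧ usum d = 0 := by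
  constructor
  · rintro ⟨h1, h2, h3⟩
    refine ⟨h1, fun k => ?_, ?_⟩
    · have hs : star ∉ d.take k := fun hh => h1 (List.mem_of_mem_take hh)
      rw [usum_eq_counts hs]
      have := h2 k
      omega
    · rw [usum_eq_counts h1]
      omega
  · rintro ⟨h1, h2, h3⟩
    refine ⟨h1, fun k => ?_, ?_⟩
    · have hs : star ∉ d.take k := fun hh => h1 (List.mem_of_mem_take hh)
      have := h2 k
      rw [usum_eq_counts hs] at this
      omega
    · have := usum_eq_counts h1
      omega

lemma dyck_usum {d : List DyckSym} (hd : IsDyckList d) : usum d = 0 :=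
  ((isDyckList_iff d).1 hd).2.2

lemma dyck_take_nonneg {d : List DyckSym} (hd : IsDyckList d) (k : ℕ) :
    0 ≤ usum (d.take k) := ((isDyckList_iff d).1 hd).2.1 k

lemma dyck_drop_nonpos {d : List DyckSym} (hd : IsDyckList d) (k : ℕ) :
    usum (d.drop k) ≤ 0 := by
  have h := dyck_usum hd
  have h2 := dyck_take_nonneg hd k
  have : usum (d.take k) + usum (d.drop k) = usum d := by
    rw [← usum_append, List.take_append_drop]
  omega

end PDW

namespace PDW
open DyckSym

/-- A "good" word: concatenation of nonempty Dyck words and single stars. -/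
inductive GoodW : List DyckSym → Prop
  | nil : GoodW []
  | star {l : List DyckSym} : GoodW l → GoodW (DyckSym.star :: l)
  | dyck {d l : List DyckSym} : IsDyckList d → d ≠ [] → GoodW l → GoodW (d ++ l)

def goodblock (b : List DyckSym) : Prop := (IsDyckList b ∧ b ≠ []) ∨ b = [star]

lemma goodblock_ne_nil {b : List DyckSym} (h : goodblock b) : b ≠ [] := by
  rcases h with ⟨_, h⟩ | h
  · exact h
  · rw [h]; simp

lemma goodW_join {bs : List (List DyckSym)} (h : ∀ b ∈ bs, goodblock b) :
    GoodW bs.flatten := by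
  induction bs with
  | nil => exact GoodW.nil
  | cons b bs ih =>
    have hb := h b List.mem_cons_self
    have ht := ih (fun c hc => h c (List.mem_cons_of_mem _ hc))
    rw [List.flatten_cons]
    rcases hb with ⟨hd, hne⟩ | hstar
    · exact GoodW.dyck hd hne ht
    · rw [hstar]; exact GoodW.star ht

/-- Every suffix of a good word has nonpositive `usum`. -/
lemma goodW_drop_nonpos {l : List DyckSym} (h : GoodW l) : ∀ m, usum (l.drop m) ≤ 0 := by
  induction h with
  | nil => intro m; simp
  | @star l _ ih =>
    intro m
    cases m with
    | zero =>
      have := ih 0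
      simp only [List.drop_zero] at this ⊢
      rw [usum_cons]
      simp only [uval]
      omega
    | succ m => rw [List.drop_succ_cons]; exact ih m
  | @dyck d l hd hne _ ih =>
    intro m
    rcases le_or_gt m d.length with hm | hm
    · rw [List.drop_append_of_le_length hm, usum_append]
      have h1 : usum (d.drop m) ≤ 0 := dyck_drop_nonpos hd m
      have h2 := ih 0
      simp only [List.drop_zero] at h2
      omega
    · rw [show m = d.length + (m - d.length) by omega, List.drop_length_add_append]
      exact ih _

end PDW

namespace PDW
open DyckSym

lemma uval_le_one (s : DyckSym) : uval s ≤ 1 := by cases s <;> simp [uval]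
lemma neg_one_le_uval (s : DyckSym) : -1 ≤ uval s := by cases s <;> simp [uval]

lemma goodW_of_aux : ∀ (N : ℕ) (w : List DyckSym), w.length ≤ N →
    (∀ m (hm : m < w.length), w[m] = rpar →
      ∃ t < m, usum (w.take t) < usum (w.take m)) →
    (∀ m (hm : m < w.length), w[m] = star →
      ∀ t < m, usum (w.take m) ≤ usum (w.take t)) →
    (∀ t, usum w ≤ usum (w.take t)) →
    GoodW w := by
  intro N
  induction N with
  | zero =>
    intro w hw _ _ _
    rw [List.length_eq_zero_iff.1 (Nat.le_zero.1 hw)]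
    exact GoodW.nil
  | succ N ih =>
    intro w hw h1 h2 h3
    match w with
    | [] => exact GoodW.nil
    | DyckSym.rpar :: w' =>
      obtain ⟨t, ht, _⟩ := h1 0 (by simp) rfl
      omega
    | DyckSym.star :: w' =>
      have key : ∀ k, usum ((DyckSym.star :: w').take (k+1)) = -1 + usum (w'.take k) := by
        intro k
        rw [List.take_succ_cons, usum_cons]
        simp [uval]
      apply GoodW.star
      apply ih w' (by simpa using hw)
      · intro m hm hr
        obtain ⟨t, ht, hlt⟩ := h1 (m+1) (by simpa using hm) (by simpa using hr)
        rw [key m] at hlt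
        match t with
        | 0 =>
          simp only [List.take_zero, usum_nil] at hlt
          have hb : usum (w'.take m) ≤ (w'.take m).length := usum_le_length _
          have hbl : (w'.take m).length ≤ m := by
            simpa using List.length_take_le m w'
          refine ⟨0, by omega, by simp; omega⟩
        | t + 1 =>
          rw [key t] at hlt
          exact ⟨t, by omega, by omega⟩
      · intro m hm hs t ht
        have := h2 (m+1) (by simpa using hm) (by simpa using hs) (t+1) (by omega)
        rw [key m, key t] at this
        omega
      · intro t
        have := h3 (t+1)
        rw [key t, usum_cons] at this
        simp only [uval] at this
        omega
    | DyckSym.lpar :: w' =>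
      set w := lpar :: w' with hwdef
      have hL : 0 < w.length := by simp [hwdef]
      have hstep : ∀ m (hm : m + 1 ≤ w.length),
          usum (w.take (m+1)) = usum (w.take m) + uval (w[m]'(by omega)) := by
        intro m hm
        have htk : w.take (m+1) = w.take m ++ [w[m]'(by omega)] := by
          rw [List.take_succ, List.getElem?_eq_getElem (show m < w.length by omega)]
          rfl
        rw [htk, usum_append, usum_singleton]
      have hex : ∃ T, 1 ≤ T ∧ usum (w.take T) ≤ 0 := by
        refine ⟨w.length, by omega, ?_⟩
        rw [List.take_length]
        simpa using h3 0
      obtain ⟨T, ⟨h1T, hT0'⟩, hmin⟩ :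
          ∃ T, (1 ≤ T ∧ usum (w.take T) ≤ 0) ∧ ∀ t < T, ¬(1 ≤ t ∧ usum (w.take t) ≤ 0) :=
        ⟨Nat.find hex, Nat.find_spec hex, fun t ht => Nat.find_min hex ht⟩
      have hTle : T ≤ w.length := by
        by_contra hh
        exact hmin w.length (by omega) ⟨by omega, by rw [List.take_length]; simpa using h3 0⟩
      have hpos : ∀ t, 1 ≤ t → t < T → 0 < usum (w.take t) := by
        intro t htt htT
        have := hmin t htT
        push_neg at this
        have := this htt
        omega
      have htake1 : usum (w.take 1) = 1 := by
        rw [hwdef, List.take_succ_cons, List.take_zero, usum_cons]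
        simp [uval]
      have hT2 : 2 ≤ T := by
        rcases Nat.lt_or_ge T 2 with hh | hh
        · have hT1 : T = 1 := by omega
          rw [hT1] at hT0'
          omega
        · exact hh
      have hnn : ∀ t, t ≤ T → 0 ≤ usum (w.take t) := by
        intro t htT
        rcases Nat.eq_or_lt_of_le htT with rfl | hlt
        · have hs := hstep (t-1) (by omega)
          have hc : usum (w.take t) = usum (w.take (t-1+1)) := by
            rw [show t - 1 + 1 = t by omega]
          have ha := hpos (t-1) (by omega) (by omega)
          have hb := neg_one_le_uval (w[t-1]'(by omega))
          omega
        · match t with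
          | 0 => simp
          | t+1 => exact le_of_lt (hpos (t+1) (by omega) hlt)
      have hT0 : usum (w.take T) = 0 := le_antisymm hT0' (hnn T le_rfl)
      have hnostar : ∀ m (hm : m < T), w[m]'(by omega) ≠ DyckSym.star := by
        intro m hm hs
        match m with
        | 0 => simp [hwdef] at hs
        | m+1 =>
          have ha := h2 (m+1) (by omega) hs 0 (by omega)
          have hb := hpos (m+1) (by omega) hm
          simp only [List.take_zero, usum_nil] at ha
          omega
      have hdl : (w.take T).length = T := by rw [List.length_take]; omega
      have hd : IsDyckList (w.take T) := by
        rw [isDyckList_iff]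
        refine ⟨?_, ?_, hT0⟩
        · intro hmem
          rw [List.mem_iff_getElem] at hmem
          obtain ⟨m, hm, hEq⟩ := hmem
          rw [hdl] at hm
          have : w[m]'(by omega) = DyckSym.star := by
            rw [← hEq]
            exact List.getElem_take.symm
          exact hnostar m hm this
        · intro k
          rw [List.take_take]
          rcases Nat.eq_or_lt_of_le (min_le_right k T) with hmin2 | hmin2
          · rw [hmin2, hT0]
          · exact hnn _ (le_of_lt hmin2)
      have hdne : (w.take T) ≠ [] := by
        apply List.ne_nil_of_length_pos
        omega
      have key : ∀ t, usum (w.take (T + t)) = usum ((w.drop T).take t) := by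
        intro t
        rw [List.take_add, usum_append, hT0, zero_add]
      have hw2len : (w.drop T).length = w.length - T := by rw [List.length_drop]
      have hget : ∀ m (hm : m < (w.drop T).length), (w.drop T)[m]'hm = w[T+m]'(by rw [hw2len] at hm; omega) :=
        fun m hm => List.getElem_drop
      have hgw2 : GoodW (w.drop T) := by
        apply ih (w.drop T)
        · rw [hw2len]; omega
        · intro m hm hr
          rw [hget m hm] at hr
          obtain ⟨t, ht, hlt⟩ := h1 (T+m) (by rw [hw2len] at hm; omega) hr
          rw [key m] at hlt
          rcases Nat.lt_or_ge t T with htT | htT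
          · have h0 : 0 ≤ usum (w.take t) := hnn t (by omega)
            have hm0 : 0 < m := by
              rcases Nat.eq_zero_or_pos m with rfl | hmm
              · simp only [List.take_zero, usum_nil] at hlt; omega
              · exact hmm
            refine ⟨0, hm0, by simp only [List.take_zero, usum_nil]; omega⟩
          · refine ⟨t - T, by omega, ?_⟩
            rw [← key (t - T), show T + (t - T) = t by omega]
            exact hlt
        · intro m hm hs t ht
          rw [hget m hm] at hs
          have := h2 (T+m) (by rw [hw2len] at hm; omega) hs (T+t) (by omega)
          rw [key m, key t] at this
          exact this
        · intro t
          have ha := h3 (T + t)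
          rw [key t] at ha
          have hsplit : usum w = usum (w.take T) + usum (w.drop T) := by
            rw [← usum_append, List.take_append_drop]
          rw [hT0] at hsplit
          omega
      have hw : w = (w.take T) ++ (w.drop T) := (List.take_append_drop T w).symm
      rw [hw]
      exact GoodW.dyck hd hdne hgw2

lemma goodW_of (w : List DyckSym)
    (h1 : ∀ m (hm : m < w.length), w[m] = rpar →
      ∃ t < m, usum (w.take t) < usum (w.take m))
    (h2 : ∀ m (hm : m < w.length), w[m] = star →
      ∀ t < m, usum (w.take m) ≤ usum (w.take t))
    (h3 : ∀ t, usum w ≤ usum (w.take t)) : GoodW w :=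
  goodW_of_aux w.length w le_rfl h1 h2 h3

end PDW

namespace PDW
open DyckSym

@[simp] lemma wordOn_zero {n : ℕ} {f : ZMod n → DyckSym} (a : ℤ) : wordOn n f a 0 = [] := by
  rw [wordOn_eq]; simp

/-- From an exact interval cover of `ZMod n`, reading `n` letters from the start of any
block decomposes into the blocks, in cyclic order. -/
lemma linearize {n : ℕ} (hn : 0 < n) {k : ℕ} (start : Fin k → ℤ) (len : Fin k → ℕ)
    (hlen : ∀ j, 0 < len j)
    (hcov : ∀ x : ZMod n, ∃! p : Fin k × ℕ,
      p.2 < len p.1 ∧ x = ((start p.1 + p.2 : ℤ) : ZMod n))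
    (f : ZMod n → DyckSym)
    (hblk : ∀ j, goodblock (wordOn n f (start j) (len j)))
    (j₀ : Fin k) :
    ∃ bs' : List (List DyckSym), (∀ b ∈ (wordOn n f (start j₀) (len j₀) :: bs'), goodblock b) ∧
      wordOn n f (start j₀) n = (wordOn n f (start j₀) (len j₀) :: bs').flatten := by
  classical
  -- offset zero lemma
  have hzero : ∀ (j : Fin k) (p : Fin k × ℕ), p.2 < len p.1 →
      ((start j + len j : ℤ) : ZMod n) = ((start p.1 + p.2 : ℤ) : ZMod n) → p.2 = 0 := by
    intro j p hp heq
    by_contra h0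
    obtain ⟨q, hq⟩ : ∃ q, p.2 = q + 1 := ⟨p.2 - 1, by omega⟩
    have h1 : (len j - 1 : ℕ) < len j := by have := hlen j; omega
    have e1 : ((start j + ((len j - 1 : ℕ) : ℤ) : ℤ) : ZMod n)
        = ((start p.1 + (q : ℤ) : ℤ) : ZMod n) := by
      have heq' := congrArg (fun z => z - (1 : ZMod n)) heq
      have c1 : ((start j + ((len j - 1 : ℕ) : ℤ) : ℤ) : ZMod n)
          = ((start j + len j : ℤ) : ZMod n) - 1 := by
        push_cast [Nat.cast_sub (by omega : 1 ≤ len j)]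
        ring
      have c2 : ((start p.1 + (q : ℤ) : ℤ) : ZMod n)
          = ((start p.1 + p.2 : ℤ) : ZMod n) - 1 := by
        rw [hq]
        push_cast
        ring
      rw [c1, c2, heq']
    have huniq := (hcov (((start j + ((len j - 1 : ℕ) : ℤ) : ℤ) : ZMod n))).unique
      (y₁ := (j, len j - 1)) (y₂ := (p.1, q))
      ⟨h1, rfl⟩ ⟨show q < len p.1 by omega, e1⟩
    have : p.2 = len j := by
      have h2 : len j - 1 = q := congrArg Prod.snd huniq
      omega
    have h3 : p.1 = j := (congrArg Prod.fst huniq).symm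
    rw [h3] at hp
    omega
  -- step function
  have step : ∀ j : Fin k, ∃ j' : Fin k,
      ((start j' : ℤ) : ZMod n) = ((start j + len j : ℤ) : ZMod n) := by
    intro j
    obtain ⟨p, ⟨hp1, hp2⟩, -⟩ := hcov ((start j + len j : ℤ) : ZMod n)
    have h0 : p.2 = 0 := hzero j p hp1 hp2
    refine ⟨p.1, ?_⟩
    rw [h0] at hp2
    push_cast at hp2
    simpa using hp2.symm
  choose nxt hnxt using step
  set J : ℕ → Fin k := fun t => nxt^[t] j₀ with hJ
  set M : ℕ → ℕ := fun t => ∑ s ∈ Finset.range t, len (J s) with hM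
  have hMsucc : ∀ t, M (t+1) = M t + len (J t) := by
    intro t; rw [hM]; exact Finset.sum_range_succ _ _
  have hJsucc : ∀ t, J (t+1) = nxt (J t) := by
    intro t; rw [hJ]; exact Function.iterate_succ_apply' _ _ _
  have F1 : ∀ t, ((start (J t) : ℤ) : ZMod n) = ((start j₀ + (M t : ℤ) : ℤ) : ZMod n) := by
    intro t
    induction t with
    | zero => simp [hJ, hM]
    | succ t ih =>
      rw [hJsucc t, hnxt (J t), hMsucc t]
      push_cast
      push_cast at ih
      rw [ih]
      ring
  have hMlow : ∀ t, t ≤ M t := by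
    intro t
    induction t with
    | zero => omega
    | succ t ih => have := hlen (J t); rw [hMsucc t]; omega
  have hex : ∃ t, n ≤ M t := ⟨n, hMlow n⟩
  set T := Nat.find hex with hT
  have hTspec : n ≤ M T := Nat.find_spec hex
  have hTmin : ∀ t < T, M t < n := fun t ht => by
    have := Nat.find_min hex ht; omega
  have hT1 : 1 ≤ T := by
    rcases Nat.eq_zero_or_pos T with h | h
    · rw [hM] at hTspec; rw [h] at hTspec; simp at hTspec; omega
    · omega
  have hMT : M T = n := by
    by_contra hne
    have hlt : n < M T := by omega
    have hM1 : M (T-1) < n := hTmin (T-1) (by omega)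
    have hMeq : M T = M (T-1) + len (J (T-1)) := by
      rw [show T = (T-1)+1 by omega] at hTspec ⊢
      exact hMsucc (T-1)
    set r : ℕ := n - M (T-1) with hr
    have hr1 : 1 ≤ r := by omega
    have hrlen : r < len (J (T-1)) := by omega
    have e2 : ((start j₀ : ℤ) : ZMod n) = ((start (J (T-1)) + (r:ℤ) : ℤ) : ZMod n) := by
      have := F1 (T-1)
      push_cast at this ⊢
      rw [this]
      have : ((M (T-1) : ℤ) + (r : ℤ) : ZMod n) = ((n : ℤ) : ZMod n) := by
        push_cast
        rw [show ((M (T-1) : ℕ) : ZMod n) + ((r:ℕ) : ZMod n) = (((M (T-1) + r : ℕ)) : ZMod n) by push_cast; ring]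
        rw [show M (T-1) + r = n by omega]
      push_cast at this
      rw [add_assoc, this]
      simp
    have huniq := (hcov ((start j₀ : ℤ) : ZMod n)).unique
      (y₁ := (j₀, 0)) (y₂ := (J (T-1), r))
      ⟨hlen j₀, by push_cast; simp⟩ ⟨hrlen, e2⟩
    have : (0 : ℕ) = r := congrArg Prod.snd huniq
    omega
  -- the block list
  have claim : ∀ t, wordOn n f (start j₀) (M t)
      = ((List.range t).map (fun s => wordOn n f (start (J s)) (len (J s)))).flatten := by
    intro t
    induction t with
    | zero => simp [hM]
    | succ t ih =>
      rw [hMsucc t, wordOn_add, List.range_succ, List.map_append, List.flatten_append, ← ih]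
      simp only [List.map_cons, List.map_nil, List.flatten_cons, List.flatten_nil, List.append_nil]
      congr 1
      exact wordOn_congr (F1 t).symm _
  have hmain := claim T
  rw [hMT] at hmain
  have hTsplit : List.range T = 0 :: (List.range (T-1)).map Nat.succ := by
    rw [show T = (T-1)+1 by omega, List.range_succ_eq_map]
    simp
  refine ⟨((List.range (T-1)).map Nat.succ).map (fun s => wordOn n f (start (J s)) (len (J s))), ?_, ?_⟩
  · intro b hb
    rcases List.mem_cons.1 hb with rfl | hb
    · exact hblk j₀
    · obtain ⟨s, -, rfl⟩ := List.mem_map.1 hb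
      exact hblk (J s)
  · rw [hmain, hTsplit]
    simp only [List.map_cons]
    rfl
end PDW

namespace PDW
open DyckSym

lemma join_index {α : Type*} : ∀ (bs : List (List α)), (∀ b ∈ bs, b ≠ []) →
    ∀ r, r < bs.flatten.length →
    ∃! q : ℕ × ℕ, q.1 < bs.length ∧ q.2 < (bs.getD q.1 []).length ∧
      r = ((bs.take q.1).flatten).length + q.2 := by
  intro bs
  induction bs with
  | nil => intro _ r hr; simp at hr
  | cons b bs ih =>
    intro hne r hr
    rcases Nat.lt_or_ge r b.length with hrb | hrb
    · refine ⟨(0, r), ⟨by simp, by simpa using hrb, by simp⟩, ?_⟩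
      rintro ⟨j, s⟩ ⟨hj, hs, hoff⟩
      dsimp only at hj hs hoff
      match j with
      | 0 => simp at hoff; simp [hoff]
      | j + 1 =>
        exfalso
        simp only [List.take_succ_cons, List.flatten_cons, List.length_append] at hoff
        omega
    · have hb : 0 < b.length := List.length_pos_iff.2 (hne b List.mem_cons_self)
      have hr' : r - b.length < bs.flatten.length := by
        simp only [List.flatten_cons, List.length_append] at hr
        omega
      obtain ⟨q, ⟨hj, hs, hoff⟩, huniq⟩ :=
        ih (fun c hc => hne c (List.mem_cons_of_mem _ hc)) (r - b.length) hr'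
      refine ⟨(q.1 + 1, q.2), ⟨by simpa using hj, by simpa using hs, ?_⟩, ?_⟩
      · simp only [List.take_succ_cons, List.flatten_cons, List.length_append]
        omega
      · rintro ⟨j', s'⟩ ⟨hj', hs', hoff'⟩
        dsimp only at hj' hs' hoff'
        match j' with
        | 0 =>
          exfalso
          simp only [List.getD_cons_zero] at hs'
          simp only [List.take_zero, List.flatten_nil, List.length_nil, zero_add] at hoff'
          omega
        | j' + 1 =>
          have heq : (j', s') = q := by
            apply huniq
            refine ⟨by simpa using hj', by simpa using hs', ?_⟩
            simp only [List.take_succ_cons, List.flatten_cons, List.length_append] at hoff'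
            dsimp only
            omega
          have h1 : j' = q.1 := by rw [← heq]
          have h2 : s' = q.2 := by rw [← heq]
          simp only [Prod.mk.injEq]
          exact ⟨by omega, h2⟩

lemma flatten_decomp {α : Type*} (bs : List (List α)) (j : ℕ) (hj : j < bs.length) :
    bs.flatten = (bs.take j).flatten ++ (bs.getD j [] ++ (bs.drop (j+1)).flatten) := by
  conv_lhs => rw [← List.take_append_drop j bs]
  rw [List.flatten_append]
  congr 1
  rw [List.drop_eq_getElem_cons hj, List.flatten_cons, List.getD_eq_getElem bs [] hj]

lemma natCast_inj_of_lt {n r r' : ℕ} (hr : r < n) (hr' : r' < n)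
    (h : (r : ZMod n) = (r' : ZMod n)) : r = r' := by
  haveI : NeZero n := ⟨by omega⟩
  have := congrArg ZMod.val h
  rwa [ZMod.val_cast_of_lt hr, ZMod.val_cast_of_lt hr'] at this

lemma isPDW_of_good {n : ℕ} (hn : 0 < n) {f : ZMod n → DyckSym} (a : ℤ)
    (bs : List (List DyckSym)) (hbs : ∀ b ∈ bs, goodblock b)
    (hw : wordOn n f a n = bs.flatten) : IsPartialDyckWord n f := by
  haveI : NeZero n := ⟨hn.ne'⟩
  have hne : ∀ b ∈ bs, b ≠ [] := fun b hb => goodblock_ne_nil (hbs b hb)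
  have hflen : bs.flatten.length = n := by rw [← hw, wordOn_length]
  have hofflen : ∀ j, j < bs.length →
      ((bs.take j).flatten).length + (bs.getD j []).length ≤ n := by
    intro j hj
    have hl := congrArg List.length (flatten_decomp bs j hj)
    simp only [List.length_append] at hl
    omega
  have hword : ∀ j, j < bs.length →
      wordOn n f (a + (((bs.take j).flatten).length : ℤ)) ((bs.getD j []).length)
        = bs.getD j [] := by
    intro j hj
    have hdec := flatten_decomp bs j hj
    set A := ((bs.take j).flatten).length with hA
    set B := (bs.getD j []).length with hB
    have hAB := hofflen j hj
    have h1 : wordOn n f a n = wordOn n f a A ++ wordOn n f (a + (A:ℤ)) (n - A) := by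
      have h := wordOn_add (n := n) (f := f) a A (n - A)
      rw [show A + (n - A) = n by omega] at h
      exact h
    have h2 : wordOn n f (a + (A:ℤ)) (n - A)
        = wordOn n f (a + (A:ℤ)) B ++ wordOn n f (a + (A:ℤ) + (B:ℤ)) (n - A - B) := by
      have h := wordOn_add (n := n) (f := f) (a + (A:ℤ)) B (n - A - B)
      rw [show B + (n - A - B) = n - A by omega] at h
      exact h
    rw [h1, h2, hdec] at hw
    have i1 := List.append_inj hw (by rw [wordOn_length])
    have i2 := List.append_inj i1.2 (by rw [wordOn_length])
    exact i2.1
  refine ⟨bs.length, fun j => a + (((bs.take j.val).flatten).length : ℤ),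
    fun j => (bs.getD j.val []).length, ?_, ?_, ?_⟩
  · intro j
    exact List.length_pos_iff.2 (hne _ (List.getD_eq_getElem bs [] j.isLt ▸ List.getElem_mem _))
  · intro x
    set r := (x - (a : ZMod n)).val with hrdef
    have hr : r < n := ZMod.val_lt _
    have hx : x = ((a + (r:ℤ) : ℤ) : ZMod n) := by
      push_cast
      rw [hrdef, ZMod.natCast_val, ZMod.cast_id]
      ring
    obtain ⟨q, ⟨hj, hs, hoffq⟩, huniq⟩ := join_index bs hne r (by omega)
    have hcond : ∀ p : Fin bs.length × ℕ,
        (p.2 < (bs.getD p.1.val []).length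
          ∧ x = ((a + (((bs.take p.1.val).flatten).length : ℤ) + (p.2 : ℤ) : ℤ) : ZMod n))
        → p.2 < (bs.getD p.1.val []).length
          ∧ r = ((bs.take p.1.val).flatten).length + p.2 := by
      rintro p ⟨hps, hpx⟩
      refine ⟨hps, ?_⟩
      set A := ((bs.take p.1.val).flatten).length with hA
      have hrp : A + p.2 < n := by
        have := hofflen p.1.val p.1.isLt
        omega
      have hee : ((r:ℕ) : ZMod n) = ((A + p.2 : ℕ) : ZMod n) := by
        have h' : ((a + (r:ℤ) : ℤ) : ZMod n)
            = ((a + (A:ℤ) + (p.2:ℤ) : ℤ) : ZMod n) := by rw [← hx, hpx]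
        push_cast at h'
        have h'' : (a : ZMod n) + (r : ZMod n) = (a : ZMod n) + ((A : ZMod n) + (p.2 : ZMod n)) := by
          rw [h']; ring
        have hc := add_left_cancel h''
        push_cast
        rw [hc]
      exact natCast_inj_of_lt hr hrp hee
    refine ⟨(⟨q.1, hj⟩, q.2), ⟨hs, ?_⟩, ?_⟩
    · rw [hx]
      push_cast
      rw [hoffq]
      push_cast
      ring
    · intro p hp
      dsimp only at hp
      have hq' := hcond p ⟨hp.1, hp.2⟩
      have := huniq (p.1.val, p.2) ⟨p.1.isLt, hq'.1, hq'.2⟩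
      have e1 : p.1.val = q.1 := by rw [← this]
      have e2 : p.2 = q.2 := by rw [← this]
      refine Prod.ext (Fin.ext e1) e2
  · intro j
    have hgb := hbs _ (List.getD_eq_getElem bs [] j.isLt ▸ List.getElem_mem _)
    rw [hword j.val j.isLt]
    rcases hgb with ⟨hd, -⟩ | hstar
    · exact Or.inl hd
    · exact Or.inr hstar

end PDW

namespace PDW
open DyckSym

/-- `x` is matched as a closing parenthesis: some arc ending just before `x`
has positive `usum`. -/
def MatchedAt (n : ℕ) (f : ZMod n → DyckSym) (x : ℤ) : Prop :=
  ∃ ℓ : ℕ, 1 ≤ ℓ ∧ ℓ ≤ n ∧ 0 < usum (wordOn n f (x - ℓ) ℓ)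

lemma usum_wordOn_congr {n : ℕ} {f g : ZMod n → DyckSym}
    (h : ∀ y, f y = lpar ↔ g y = lpar) (a : ℤ) (L : ℕ) :
    usum (wordOn n f a L) = usum (wordOn n g a L) := by
  rw [wordOn_eq, wordOn_eq, usum, usum, List.map_map, List.map_map]
  congr 1
  apply List.map_congr_left
  intro j _
  simp only [Function.comp_apply]
  rw [uval_eq, uval_eq]
  by_cases hc : f ((a + (j:ℤ) : ℤ) : ZMod n) = lpar
  · rw [if_pos hc, if_pos ((h _).1 hc)]
  · rw [if_neg hc, if_neg (fun hh => hc ((h _).2 hh))]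

lemma matchedAt_congr_fun {n : ℕ} {f g : ZMod n → DyckSym}
    (h : ∀ y, f y = lpar ↔ g y = lpar) (x : ℤ) :
    MatchedAt n f x ↔ MatchedAt n g x := by
  unfold MatchedAt
  constructor <;> rintro ⟨ℓ, h1, h2, h3⟩ <;> refine ⟨ℓ, h1, h2, ?_⟩
  · rwa [← usum_wordOn_congr h]
  · rwa [usum_wordOn_congr h]

lemma matchedAt_congr_base {n : ℕ} {f : ZMod n → DyckSym} {x y : ℤ}
    (h : (x : ZMod n) = (y : ZMod n)) :
    MatchedAt n f x ↔ MatchedAt n f y := by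
  unfold MatchedAt
  constructor <;> rintro ⟨ℓ, h1, h2, h3⟩ <;> refine ⟨ℓ, h1, h2, ?_⟩
  · rwa [wordOn_congr (a := x - ℓ) (b := y - ℓ) (by push_cast; rw [h]) ℓ] at h3
  · rwa [wordOn_congr (a := y - ℓ) (b := x - ℓ) (by push_cast; rw [h]) ℓ] at h3

/-- The partial Dyck word determined by a set of opening positions. -/
noncomputable def fromSet (n : ℕ) (s : Finset (ZMod n)) : ZMod n → DyckSym :=
  fun x => if x ∈ s then DyckSym.lpar else
    if MatchedAt n (fun y => if y ∈ s then DyckSym.lpar else DyckSym.rpar) x.val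
    then DyckSym.rpar else DyckSym.star

lemma fromSet_lpar_iff {n : ℕ} (s : Finset (ZMod n)) (x : ZMod n) :
    fromSet n s x = lpar ↔ x ∈ s := by
  unfold fromSet
  by_cases h : x ∈ s
  · simp [h]
  · simp only [if_neg h]
    constructor
    · intro hh
      by_cases h2 : MatchedAt n (fun y => if y ∈ s then DyckSym.lpar else DyckSym.rpar) x.val
      · rw [if_pos h2] at hh; exact absurd hh (by simp)
      · rw [if_neg h2] at hh; exact absurd hh (by simp)
    · intro hh; exact absurd hh h

lemma fromSet_aux_iff {n : ℕ} (s : Finset (ZMod n)) :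
    ∀ y, (fun y => if y ∈ s then DyckSym.lpar else DyckSym.rpar) y = lpar ↔ fromSet n s y = lpar := by
  intro y
  rw [fromSet_lpar_iff]
  by_cases h : y ∈ s <;> simp [h]

lemma fromSet_rpar_iff {n : ℕ} (s : Finset (ZMod n)) (x : ZMod n) (hx : x ∉ s) :
    fromSet n s x = rpar ↔ MatchedAt n (fromSet n s) x.val := by
  rw [← matchedAt_congr_fun (fromSet_aux_iff s) x.val]
  unfold fromSet
  rw [if_neg hx]
  by_cases h : MatchedAt n (fun y => if y ∈ s then DyckSym.lpar else DyckSym.rpar) (x.val : ℤ)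
  · simp [h]
  · simp [h]

lemma fromSet_star_iff {n : ℕ} (s : Finset (ZMod n)) (x : ZMod n) (hx : x ∉ s) :
    fromSet n s x = star ↔ ¬ MatchedAt n (fromSet n s) x.val := by
  rw [← matchedAt_congr_fun (fromSet_aux_iff s) x.val]
  unfold fromSet
  rw [if_neg hx]
  by_cases h : MatchedAt n (fun y => if y ∈ s then DyckSym.lpar else DyckSym.rpar) (x.val : ℤ)
  · simp [h]
  · simp [h]

lemma usum_wordOn_sum {n : ℕ} (f : ZMod n → DyckSym) (a : ℤ) (L : ℕ) :
    usum (wordOn n f a L) = ∑ j ∈ Finset.range L, uval (f ((a + (j:ℤ) : ℤ) : ZMod n)) := by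
  induction L with
  | zero => simp
  | succ L ih =>
    rw [wordOn_add a L 1, usum_append, wordOn_one, usum_singleton, ih,
      Finset.sum_range_succ]

lemma usum_window {n : ℕ} [NeZero n] (f : ZMod n → DyckSym) (a : ℤ) :
    usum (wordOn n f a n)
      = 2 * ((Finset.univ.filter (fun x => f x = lpar)).card : ℤ) - n := by
  rw [usum_wordOn_sum]
  have hbij : ∑ j ∈ Finset.range n, uval (f ((a + (j:ℤ) : ℤ) : ZMod n))
      = ∑ x : ZMod n, uval (f x) := by
    refine Finset.sum_nbij' (i := fun (j : ℕ) => ((a + (j:ℤ) : ℤ) : ZMod n))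
      (j := fun x => (x - (a : ZMod n)).val) (t := Finset.univ)
      (f := fun (j : ℕ) => uval (f ((a + (j:ℤ) : ℤ) : ZMod n))) (g := fun x => uval (f x))
      ?_ ?_ ?_ ?_ ?_
    · intro j _; exact Finset.mem_univ _
    · intro x _; exact Finset.mem_range.2 (ZMod.val_lt _)
    · intro j hj
      rw [Finset.mem_range] at hj
      push_cast
      rw [show (a : ZMod n) + (j : ZMod n) - (a : ZMod n) = (j : ZMod n) by ring]
      exact ZMod.val_cast_of_lt hj
    · intro x _
      push_cast
      rw [ZMod.natCast_val, ZMod.cast_id]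
      ring
    · intro j _; rfl
  rw [hbij]
  have hsplit := Finset.sum_filter_add_sum_filter_not Finset.univ
    (fun x : ZMod n => f x = lpar) (fun x => uval (f x))
  have h1 : ∑ x ∈ Finset.univ.filter (fun x : ZMod n => f x = lpar), uval (f x)
      = ((Finset.univ.filter (fun x : ZMod n => f x = lpar)).card : ℤ) := by
    rw [Finset.sum_congr rfl (g := fun _ => (1:ℤ)) ?_]
    · simp
    · intro x hx
      rw [Finset.mem_filter] at hx
      rw [uval_eq, if_pos hx.2]
  have h2 : ∑ x ∈ Finset.univ.filter (fun x : ZMod n => ¬ f x = lpar), uval (f x)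
      = -((Finset.univ.filter (fun x : ZMod n => ¬ f x = lpar)).card : ℤ) := by
    rw [Finset.sum_congr rfl (g := fun _ => (-1:ℤ)) ?_]
    · simp
    · intro x hx
      rw [Finset.mem_filter] at hx
      rw [uval_eq, if_neg hx.2]
  have hcard := Finset.card_filter_add_card_filter_not
    (s := (Finset.univ : Finset (ZMod n))) (p := fun x => f x = lpar)
  rw [Finset.card_univ, ZMod.card] at hcard
  omega

end PDW

namespace PDW
open DyckSym

lemma val_intCast_eq {n : ℕ} [NeZero n] (x : ZMod n) : (((x.val : ℤ)) : ZMod n) = x := by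
  push_cast
  rw [ZMod.natCast_val, ZMod.cast_id]

lemma matched_of_rpar {n : ℕ} (hn : 0 < n) {f : ZMod n → DyckSym}
    (hf : IsPartialDyckWord n f) {x : ZMod n} (hx : f x = rpar) :
    MatchedAt n f (x.val : ℤ) := by
  haveI : NeZero n := ⟨hn.ne'⟩
  obtain ⟨k, start, len, hlen, hcov, hblk⟩ := hf
  obtain ⟨p, ⟨hp1, hp2⟩, -⟩ := hcov x
  have hlenle : len p.1 ≤ n := by
    by_contra hh
    have huniq := (hcov ((start p.1 : ℤ) : ZMod n)).unique
      (y₁ := (p.1, 0)) (y₂ := (p.1, n))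
      ⟨hlen p.1, by push_cast; ring_nf⟩
      ⟨show n < len p.1 by omega, by push_cast; rw [ZMod.natCast_self]; ring_nf⟩
    have : (0:ℕ) = n := congrArg Prod.snd huniq
    omega
  have htk : (wordOn n f (start p.1) (len p.1)).take (p.2+1)
      = (wordOn n f (start p.1) (len p.1)).take p.2 ++ [rpar] := by
    rw [wordOn_take _ (by omega), wordOn_take _ (by omega), wordOn_add _ p.2 1, wordOn_one]
    rw [← hp2, hx]
  have hmem : rpar ∈ wordOn n f (start p.1) (len p.1) := by
    have h' : rpar ∈ (wordOn n f (start p.1) (len p.1)).take (p.2+1) := by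
      rw [htk]; simp
    exact List.mem_of_mem_take h'
  have hdyck : IsDyckList (wordOn n f (start p.1) (len p.1)) := by
    rcases hblk p.1 with h | h
    · exact h
    · rw [h] at hmem; simp at hmem
  have hstar2 : star ∉ (wordOn n f (start p.1) (len p.1)).take p.2 :=
    fun hh => hdyck.1 (List.mem_of_mem_take hh)
  have hcnt := hdyck.2.1 (p.2 + 1)
  rw [htk] at hcnt
  simp only [List.count_append, List.count_singleton] at hcnt
  have hcount : ((wordOn n f (start p.1) (len p.1)).take p.2).count rpar + 1
      ≤ ((wordOn n f (start p.1) (len p.1)).take p.2).count lpar := by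
    simpa using hcnt
  have hupos : 0 < usum ((wordOn n f (start p.1) (len p.1)).take p.2) := by
    rw [usum_eq_counts hstar2]
    omega
  have hp2pos : 1 ≤ p.2 := by
    have h1 := usum_le_length ((wordOn n f (start p.1) (len p.1)).take p.2)
    have h2 : ((wordOn n f (start p.1) (len p.1)).take p.2).length ≤ p.2 := by
      simpa using List.length_take_le p.2 _
    omega
  have hM : MatchedAt n f (start p.1 + (p.2 : ℤ)) := by
    refine ⟨p.2, hp2pos, by omega, ?_⟩
    rw [show start p.1 + (p.2:ℤ) - (p.2:ℤ) = start p.1 by ring]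
    rwa [wordOn_take _ (le_of_lt hp1)] at hupos
  rwa [matchedAt_congr_base (x := (x.val : ℤ)) (y := start p.1 + (p.2:ℤ))
    (by rw [val_intCast_eq, hp2])]

lemma not_matched_of_star {n : ℕ} [NeZero n] {f : ZMod n → DyckSym}
    (hf : IsPartialDyckWord n f)
    (h2i : 2 * ((Finset.univ.filter (fun x => f x = lpar)).card) ≤ n)
    {x : ZMod n} (hx : f x = DyckSym.star) : ¬ MatchedAt n f (x.val : ℤ) := by
  have hn : 0 < n := Nat.pos_of_ne_zero (NeZero.ne n)
  obtain ⟨k, start, len, hlen, hcov, hblk⟩ := hf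
  obtain ⟨p, ⟨hp1, hp2⟩, -⟩ := hcov x
  have hwstar : wordOn n f (start p.1) (len p.1) = [star] := by
    rcases hblk p.1 with h | h
    · exfalso
      apply h.1
      have hsym : (wordOn n f (start p.1) (len p.1))[p.2]'(by rw [wordOn_length]; exact hp1)
          = DyckSym.star := by
        rw [wordOn_getElem _ hp1, ← hp2, hx]
      rw [← hsym]
      exact List.getElem_mem _
    · exact h
  have hlen1 : len p.1 = 1 := by
    have := congrArg List.length hwstar
    rw [wordOn_length] at this
    simpa using this
  have hp20 : p.2 = 0 := by omega
  have hxs : ((start p.1 : ℤ) : ZMod n) = x := by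
    rw [hp2, hp20]
    push_cast
    ring_nf
  have hblk' : ∀ j, goodblock (wordOn n f (start j) (len j)) := by
    intro j
    rcases hblk j with h | h
    · exact Or.inl ⟨h, by apply List.ne_nil_of_length_pos; rw [wordOn_length]; exact hlen j⟩
    · exact Or.inr h
  obtain ⟨bs', hgood, hflat⟩ := linearize hn start len hlen hcov f hblk' p.1
  rw [hwstar] at hflat hgood
  have hgood' : ∀ b ∈ bs', goodblock b := fun b hb => hgood b (List.mem_cons_of_mem _ hb)
  have hGW : GoodW bs'.flatten := goodW_join hgood'
  rintro ⟨ℓ, hℓ1, hℓn, hpos⟩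
  rcases eq_or_lt_of_le hℓn with rfl | hℓlt
  · have hwin := usum_window f ((x.val : ℤ) - ℓ)
    rw [hwin] at hpos
    omega
  · have harc : wordOn n f ((x.val : ℤ) - (ℓ:ℤ)) ℓ = (wordOn n f (start p.1) n).drop (n - ℓ) := by
      rw [wordOn_drop (start p.1) (show n - ℓ ≤ n by omega), show n - (n - ℓ) = ℓ by omega]
      apply wordOn_congr
      push_cast [Nat.cast_sub (le_of_lt hℓlt)]
      rw [ZMod.natCast_val, ZMod.cast_id, hxs, ZMod.natCast_self]
      ring
    rw [harc, hflat, List.flatten_cons, List.singleton_append] at hpos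
    have hdrop : (DyckSym.star :: bs'.flatten).drop (n - ℓ) = bs'.flatten.drop (n - ℓ - 1) := by
      rw [show n - ℓ = (n - ℓ - 1) + 1 by omega]
      rfl
    rw [hdrop] at hpos
    have := goodW_drop_nonpos hGW (n - ℓ - 1)
    omega

/-- Any partial Dyck word with at most `n/2` opening parentheses is determined by
its set of opening positions. -/
lemma eq_fromSet {n : ℕ} [NeZero n] {f : ZMod n → DyckSym}
    (hf : IsPartialDyckWord n f)
    (h2i : 2 * ((Finset.univ.filter (fun x => f x = lpar)).card) ≤ n) :
    f = fromSet n (Finset.univ.filter (fun x => f x = lpar)) := by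
  have hn : 0 < n := Nat.pos_of_ne_zero (NeZero.ne n)
  set s := Finset.univ.filter (fun x => f x = lpar) with hs
  have hmem : ∀ y, y ∈ s ↔ f y = lpar := by
    intro y; rw [hs, Finset.mem_filter]; simp
  have hcongr : ∀ y, f y = lpar ↔ fromSet n s y = lpar := by
    intro y
    rw [fromSet_lpar_iff, hmem]
  funext x
  by_cases hxl : f x = lpar
  · exact hxl.trans ((fromSet_lpar_iff s x).2 ((hmem x).2 hxl)).symm
  cases hc : f x with
  | lpar => exact absurd hc hxl
  | rpar =>
    have hM : MatchedAt n f (x.val : ℤ) := matched_of_rpar hn hf hc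
    rw [matchedAt_congr_fun (f := f) (g := fromSet n s) hcongr] at hM
    exact ((fromSet_rpar_iff s x (fun hh => hxl ((hmem x).1 hh))).2 hM).symm
  | star =>
    have hM : ¬ MatchedAt n f (x.val : ℤ) := not_matched_of_star hf h2i hc
    rw [matchedAt_congr_fun (f := f) (g := fromSet n s) hcongr] at hM
    exact ((fromSet_star_iff s x (fun hh => hxl ((hmem x).1 hh))).2 hM).symm

end PDW

namespace PDW
open DyckSym

lemma goodW_blocks {l : List DyckSym} (h : GoodW l) :
    ∃ bs : List (List DyckSym), (∀ b ∈ bs, goodblock b) ∧ l = bs.flatten := by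
  induction h with
  | nil => exact ⟨[], fun b hb => by simp at hb, rfl⟩
  | @star l' _ ih =>
    obtain ⟨bs, hbs, rfl⟩ := ih
    refine ⟨[DyckSym.star] :: bs, ?_, by simp⟩
    intro b hb
    rcases List.mem_cons.1 hb with rfl | hb
    · exact Or.inr rfl
    · exact hbs b hb
  | @dyck d l' hd hne _ ih =>
    obtain ⟨bs, hbs, rfl⟩ := ih
    refine ⟨d :: bs, ?_, by simp⟩
    intro b hb
    rcases List.mem_cons.1 hb with rfl | hb
    · exact Or.inl ⟨hd, hne⟩
    · exact hbs b hb

lemma filter_fromSet {n : ℕ} [NeZero n] (s : Finset (ZMod n)) :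
    Finset.univ.filter (fun x => fromSet n s x = lpar) = s := by
  ext x
  rw [Finset.mem_filter, fromSet_lpar_iff]
  simp

lemma fromSet_isPDW {n : ℕ} [NeZero n] (s : Finset (ZMod n)) (hs : 2 * s.card ≤ n) :
    IsPartialDyckWord n (fromSet n s) := by
  have hn : 0 < n := Nat.pos_of_ne_zero (NeZero.ne n)
  set f := fromSet n s with hfdef
  have hwin : ∀ a : ℤ, usum (wordOn n f a n) = 2 * (s.card:ℤ) - n := by
    intro a
    rw [usum_window, filter_fromSet]
  obtain ⟨m, hmr, hmin⟩ := Finset.exists_min_image (Finset.range n)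
    (fun t => usum (wordOn n f 0 t)) ⟨0, Finset.mem_range.2 hn⟩
  rw [Finset.mem_range] at hmr
  have hmin' : ∀ t, t < n → usum (wordOn n f 0 m) ≤ usum (wordOn n f 0 t) :=
    fun t ht => hmin t (Finset.mem_range.2 ht)
  set c : ℤ := (m : ℤ) with hcdef
  -- every arc ending at c has nonpositive sum
  have hcut : ∀ ℓ : ℕ, 1 ≤ ℓ → ℓ ≤ n → usum (wordOn n f (c - (ℓ:ℤ)) ℓ) ≤ 0 := by
    intro ℓ hℓ1 hℓn
    rcases le_or_gt ℓ m with hcase | hcase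
    · -- ℓ ≤ m
      have hsplit := wordOn_add (n := n) (f := f) 0 (m - ℓ) ℓ
      rw [show m - ℓ + ℓ = m by omega] at hsplit
      have hbase : (0 : ℤ) + ((m - ℓ : ℕ) : ℤ) = c - (ℓ:ℤ) := by
        rw [hcdef]
        push_cast [Nat.cast_sub hcase]
        ring
      rw [hbase] at hsplit
      have := hmin' (m - ℓ) (by omega)
      rw [hsplit, usum_append] at this
      omega
    · -- m < ℓ
      have hsplit := wordOn_add (n := n) (f := f) (c - (ℓ:ℤ)) (ℓ - m) m
      rw [show ℓ - m + m = ℓ by omega] at hsplit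
      have hbase : c - (ℓ:ℤ) + ((ℓ - m : ℕ) : ℤ) = 0 + (0:ℤ) := by
        rw [hcdef]
        push_cast [Nat.cast_sub (le_of_lt hcase)]
        ring
      rw [hbase] at hsplit
      have hA : usum (wordOn n f (c - (ℓ:ℤ)) (ℓ - m))
          = usum (wordOn n f ((m + n - ℓ : ℕ) : ℤ) (ℓ - m)) := by
        rw [wordOn_congr (a := c - (ℓ:ℤ)) (b := ((m + n - ℓ : ℕ) : ℤ))
          (by rw [hcdef]
              push_cast [Nat.cast_sub (show ℓ ≤ m + n by omega)]
              rw [ZMod.natCast_self]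
              ring) (ℓ - m)]
      have hsplit2 := wordOn_add (n := n) (f := f) 0 (m + n - ℓ) (ℓ - m)
      rw [show m + n - ℓ + (ℓ - m) = n by omega] at hsplit2
      have hbase2 : (0 : ℤ) + ((m + n - ℓ : ℕ) : ℤ) = ((m + n - ℓ : ℕ) : ℤ) := by ring
      rw [hbase2] at hsplit2
      have hgn := hwin 0
      rw [hsplit2, usum_append] at hgn
      have hge := hmin' (m + n - ℓ) (by omega)
      have hz : wordOn n f (0 + (0:ℤ)) m = wordOn n f 0 m := by norm_num
      rw [hsplit, usum_append, hA, hz]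
      omega
  set W := wordOn n f c n with hWdef
  have hWlen : W.length = n := by rw [hWdef, wordOn_length]
  have htakeW : ∀ t, t ≤ n → W.take t = wordOn n f c t := fun t ht => wordOn_take c ht
  have hsplitW : ∀ t, t ≤ n → ∀ u, t + u ≤ n →
      usum (W.take (t + u)) = usum (W.take t) + usum (wordOn n f (c + (t:ℤ)) u) := by
    intro t ht u htu
    rw [htakeW t ht, htakeW (t+u) htu, wordOn_add]
    rw [usum_append]
  have hC1 : ∀ m' (hm' : m' < W.length), W[m'] = rpar →
      ∃ t < m', usum (W.take t) < usum (W.take m') := by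
    intro m' hm' hr
    have hm'n : m' < n := by omega
    have hfr : f (((c + (m':ℤ)) : ℤ) : ZMod n) = rpar := by
      rw [← wordOn_getElem (n := n) (f := f) c hm'n]
      exact hr
    set x' : ZMod n := ((c + (m':ℤ) : ℤ) : ZMod n) with hx'
    have hxs : x' ∉ s := by
      intro hh
      have : f x' = lpar := (fromSet_lpar_iff s x').2 hh
      rw [hfr] at this
      exact absurd this (by simp)
    have hM : MatchedAt n f ((x'.val : ℤ)) := (fromSet_rpar_iff s x' hxs).1 hfr
    rw [matchedAt_congr_base (x := (x'.val:ℤ)) (y := c + (m':ℤ))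
      (by rw [val_intCast_eq])] at hM
    obtain ⟨ℓ, hℓ1, hℓn, hpos⟩ := hM
    rcases le_or_gt ℓ m' with hcase | hcase
    · refine ⟨m' - ℓ, by omega, ?_⟩
      have hsp := hsplitW (m' - ℓ) (by omega) ℓ (by omega)
      rw [show m' - ℓ + ℓ = m' by omega] at hsp
      have hbase : c + ((m' - ℓ:ℕ):ℤ) = c + (m':ℤ) - (ℓ:ℤ) := by
        push_cast [Nat.cast_sub hcase]
        ring
      rw [hbase] at hsp
      omega
    · have hsp := wordOn_add (n := n) (f := f) (c + (m':ℤ) - (ℓ:ℤ)) (ℓ - m') m'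
      rw [show ℓ - m' + m' = ℓ by omega] at hsp
      have hbase : c + (m':ℤ) - (ℓ:ℤ) + ((ℓ - m' : ℕ):ℤ) = c := by
        push_cast [Nat.cast_sub (le_of_lt hcase)]
        ring
      rw [hbase] at hsp
      have hbase2 : c + (m':ℤ) - (ℓ:ℤ) = c - ((ℓ - m' : ℕ):ℤ) := by
        push_cast [Nat.cast_sub (le_of_lt hcase)]
        ring
      have hA := hcut (ℓ - m') (by omega) (by omega)
      rw [← hbase2] at hA
      rw [hsp, usum_append] at hpos
      have hm'pos : 0 < m' := by
        rcases Nat.eq_zero_or_pos m' with rfl | h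
        · rw [wordOn_zero] at hpos
          simp only [usum_nil, add_zero] at hpos
          omega
        · exact h
      refine ⟨0, hm'pos, ?_⟩
      rw [htakeW m' (by omega), htakeW 0 (by omega), wordOn_zero]
      simp only [usum_nil]
      omega
  have hC2 : ∀ m' (hm' : m' < W.length), W[m'] = DyckSym.star →
      ∀ t < m', usum (W.take m') ≤ usum (W.take t) := by
    intro m' hm' hstar t ht
    have hm'n : m' < n := by omega
    have hfr : f (((c + (m':ℤ)) : ℤ) : ZMod n) = DyckSym.star := by
      rw [← wordOn_getElem (n := n) (f := f) c hm'n]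
      exact hstar
    set x' : ZMod n := ((c + (m':ℤ) : ℤ) : ZMod n) with hx'
    have hxs : x' ∉ s := by
      intro hh
      have : f x' = lpar := (fromSet_lpar_iff s x').2 hh
      rw [hfr] at this
      exact absurd this (by simp)
    have hM : ¬ MatchedAt n f ((x'.val : ℤ)) := (fromSet_star_iff s x' hxs).1 hfr
    rw [matchedAt_congr_base (x := (x'.val:ℤ)) (y := c + (m':ℤ))
      (by rw [val_intCast_eq])] at hM
    have hnp : ∀ ℓ : ℕ, 1 ≤ ℓ → ℓ ≤ n → usum (wordOn n f (c + (m':ℤ) - (ℓ:ℤ)) ℓ) ≤ 0 := by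
      intro ℓ h1 h2
      by_contra hh
      exact hM ⟨ℓ, h1, h2, by omega⟩
    have hsp := hsplitW t (by omega) (m' - t) (by omega)
    rw [show t + (m' - t) = m' by omega] at hsp
    have hbase : c + (t:ℤ) = c + (m':ℤ) - ((m' - t : ℕ):ℤ) := by
      push_cast [Nat.cast_sub (le_of_lt ht)]
      ring
    rw [hbase] at hsp
    have := hnp (m' - t) (by omega) (by omega)
    omega
  have hC3 : ∀ t, usum W ≤ usum (W.take t) := by
    intro t
    rcases le_or_gt n t with hcase | hcase
    · rw [List.take_of_length_le (by omega)]
    · have hsp := hsplitW t (by omega) (n - t) (by omega)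
      rw [show t + (n - t) = n by omega] at hsp
      have hA : usum (wordOn n f (c + (t:ℤ)) (n - t))
          = usum (wordOn n f (c - ((n - t : ℕ):ℤ)) (n - t)) := by
        rw [wordOn_congr (a := c + (t:ℤ)) (b := c - ((n - t : ℕ):ℤ))
          (by push_cast [Nat.cast_sub (le_of_lt hcase)]
              rw [ZMod.natCast_self]
              ring) (n - t)]
      have hcut' := hcut (n - t) (by omega) (by omega)
      have hWt : W.take n = W := List.take_of_length_le (by omega)
      rw [hWt] at hsp
      rw [hsp, hA]
      omega
  have hGW : GoodW W := goodW_of W hC1 hC2 hC3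
  obtain ⟨bs, hbs, hflat⟩ := goodW_blocks hGW
  rw [hWdef] at hflat
  exact isPDW_of_good hn c bs hbs hflat

end PDW

namespace PDW
open DyckSym

lemma card_lpar {n : ℕ} [NeZero n] (f : ZMod n → DyckSym) :
    Nat.card {x : ZMod n // f x = lpar} = (Finset.univ.filter (fun x => f x = lpar)).card := by
  rw [Nat.card_eq_fintype_card, Fintype.card_subtype]

lemma fromSet_card {n : ℕ} [NeZero n] (s : Finset (ZMod n)) :
    Nat.card {x : ZMod n // fromSet n s x = lpar} = s.card := by
  rw [card_lpar, filter_fromSet]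

end PDW


/-- the number of partial Dyck words on `ℤ_n` with exactly `i` left
parentheses equals `binom(n, i)`, for `0 ≤ 2i ≤ n`. -/
theorem card_partialDyckWords (n i : ℕ) (hn : 0 < n) (h : 2 * i ≤ n) :
    Nat.card {f : ZMod n → DyckSym // IsPartialDyckWord n f ∧
      Nat.card {x : ZMod n // f x = DyckSym.lpar} = i} = n.choose i := by
  haveI : NeZero n := ⟨hn.ne'⟩
  have e : {f : ZMod n → DyckSym // IsPartialDyckWord n f ∧
      Nat.card {x : ZMod n // f x = DyckSym.lpar} = i}
      ≃ {s : Finset (ZMod n) // s.card = i} :=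
    { toFun := fun fp => ⟨Finset.univ.filter (fun x => fp.1 x = DyckSym.lpar),
        by rw [← PDW.card_lpar]; exact fp.2.2⟩
      invFun := fun sp => ⟨PDW.fromSet n sp.1,
        PDW.fromSet_isPDW sp.1 (by rw [sp.2]; exact h),
        by rw [PDW.fromSet_card]; exact sp.2⟩
      left_inv := fun fp => by
        apply Subtype.ext
        refine (PDW.eq_fromSet fp.2.1 ?_).symm
        have h2 := fp.2.2
        rw [PDW.card_lpar] at h2
        omega
      right_inv := fun sp => by
        apply Subtype.ext
        exact PDW.filter_fromSet sp.1 }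
  rw [Nat.card_congr e, Nat.card_eq_fintype_card, Fintype.card_finset_len, ZMod.card]
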